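/- arXiv:1110.3600 — 2 statements merged into one kernel-verified Lean document; each statement's English description precedes it below -/
import Mathlib

section
/- If a positive presentation (S,R) satisfies Property H⁺, then for all subsets S', S'' of S, the subgroups satisfy ⟨S'⟩ ∩ ⟨S''⟩ = ⟨S' ∩ S''⟩ in the group ⟨S|R⟩. -/
/-! Let `g ∈ ⟨S'⟩ ∩ ⟨S''⟩` be represented by a word `w`. Property `H⁺` for the pair `(S', S'')`
rewrites `w` into `v u` with `u` over `S' ∩ S''` and the class of `v` in `T(S'')`. Special
transformations preserve the represented element, so the class of `v` is `g u⁻¹ ∈ ⟨S''⟩`; but `1`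
is the only element of the transversal `T(S'')` lying in `⟨S''⟩`. Hence `g = u ∈ ⟨S' ∩ S''⟩`. -/

namespace ArtinConj

/-- A word over `S ∪ S⁻¹`: a letter is a generator together with a sign
(`true` = positive letter `s`, `false` = negative letter `s⁻¹`). -/
abbrev Word (S : Type) := List (S × Bool)

/-- The positive word associated to a list of generators. -/
def pos {S : Type} (v : List S) : Word S := v.map fun s => (s, true)

/-- The formal inverse of a word. -/
def winv {S : Type} (w : Word S) : Word S := (w.map fun p => (p.1, !p.2)).reverse

/-- A presentation `(S, R)` is positive if all relations `v = v'` have both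
sides nonempty positive words. -/
def Positive {S : Type} (R : Set (List S × List S)) : Prop :=
  ∀ p ∈ R, p.1 ≠ [] ∧ p.2 ≠ []

/-- `v = v'` is a relation of `R` (relations are unoriented). -/
def InR {S : Type} (R : Set (List S × List S)) (v v' : List S) : Prop :=
  (v, v') ∈ R ∨ (v', v) ∈ R

/-- Special transformations of types `0`, `1`, `2ℓ`, `2r` associated with a
positive presentation. -/
inductive Step {S : Type} (R : Set (List S × List S)) : Word S → Word S → Prop
  /-- type 0 : remove a trivial pair `s s⁻¹` or `s⁻¹ s`. -/
  | free (w₁ w₂ : Word S) (s : S) (e : Bool) :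
      Step R (w₁ ++ [(s, e), (s, !e)] ++ w₂) (w₁ ++ w₂)
  /-- type 1 : replace a factor `v` by `v'` for a relation `v = v'`. -/
  | rel (w₁ w₂ : Word S) (v v' : List S) (h : InR R v v') :
      Step R (w₁ ++ pos v ++ w₂) (w₁ ++ pos v' ++ w₂)
  /-- type 1 : replace a factor `v⁻¹` by `v'⁻¹` for a relation `v = v'`. -/
  | relInv (w₁ w₂ : Word S) (v v' : List S) (h : InR R v v') :
      Step R (w₁ ++ winv (pos v) ++ w₂) (w₁ ++ winv (pos v') ++ w₂)
  /-- type 2r : replace `v⁻¹ v'` by `u u'⁻¹` where `v u = v' u'` is a relation,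
  `v, v'` nonempty. -/
  | rev2r (w₁ w₂ : Word S) (v v' u u' : List S) (hv : v ≠ []) (hv' : v' ≠ [])
      (h : InR R (v ++ u) (v' ++ u')) :
      Step R (w₁ ++ winv (pos v) ++ pos v' ++ w₂) (w₁ ++ pos u ++ winv (pos u') ++ w₂)
  /-- type 2ℓ : replace `v v'⁻¹` by `u⁻¹ u'` where `u v = u' v'` is a relation,
  `v, v'` nonempty. -/
  | rev2l (w₁ w₂ : Word S) (v v' u u' : List S) (hv : v ≠ []) (hv' : v' ≠ [])
      (h : InR R (u ++ v) (u' ++ v')) :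
      Step R (w₁ ++ pos v ++ winv (pos v') ++ w₂) (w₁ ++ winv (pos u) ++ pos u' ++ w₂)

/-- `w ⇝_{0,1,2} w'`. -/
def Rw {S : Type} (R : Set (List S × List S)) : Word S → Word S → Prop :=
  Relation.ReflTransGen (Step R)

/-- Evaluation of a word in a group, given an interpretation of the generators. -/
def evalW {S G : Type} [Group G] (f : S → G) (w : Word S) : G :=
  (w.map fun p => if p.2 then f p.1 else (f p.1)⁻¹).prod

/-- The set of elements of the free group corresponding to the relations of `R`. -/
def rels {S : Type} (R : Set (List S × List S)) : Set (FreeGroup S) :=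
  {x | ∃ p ∈ R, x = evalW FreeGroup.of (pos p.1) * (evalW FreeGroup.of (pos p.2))⁻¹}

/-- The element of the presented group `⟨S | R⟩` represented by a word. -/
def evalG {S : Type} (R : Set (List S × List S)) (w : Word S) :
    PresentedGroup (rels R) :=
  evalW (fun s => (PresentedGroup.of s : PresentedGroup (rels R))) w

/-- Property `H` : every word representing `1` can be transformed to the empty
word using special transformations of types `0`, `1`, `2` only. -/
def PropertyH {S : Type} (R : Set (List S × List S)) : Prop :=
  ∀ w : Word S, evalG R w = 1 → Rw R w []


/-- The subgroup of `⟨S | R⟩` generated by (the images of) a subset `S' ⊆ S`. -/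
def SG {S : Type} (R : Set (List S × List S)) (S' : Set S) :
    Subgroup (PresentedGroup (rels R)) :=
  Subgroup.closure {x | ∃ s ∈ S', x = (PresentedGroup.of s : PresentedGroup (rels R))}

/-- `T` is a left-`H`-transversal containing `1`. -/
def IsTransversal {G : Type} [Group G] (H : Subgroup G) (T : Set G) : Prop :=
  (1 : G) ∈ T ∧ ∀ g : G, ∃! t : G, t ∈ T ∧ ∃ h ∈ H, t = g * h

/-- The word `w` only involves letters `s` or `s⁻¹` with `s ∈ S'`. -/
def Supported {S : Type} (S' : Set S) (w : Word S) : Prop :=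
  ∀ p ∈ w, p.1 ∈ S'

/-- Property `H⁺` with respect to the `S`-sequence of transversals `T`: for all
`S', S₀ ⊆ S` and every word `w` whose class lies in `⟨S'⟩`, there are words `v`
over `S' ∪ S'⁻¹` and `u` over `(S' ∩ S₀) ∪ (S' ∩ S₀)⁻¹` with `w ⇝_{0,1,2} v u`
and the class of `v` in `T(S₀)`. -/
def PropertyHPlus {S : Type} (R : Set (List S × List S))
    (T : Set S → Set (PresentedGroup (rels R))) : Prop :=
  ∀ (S' S₀ : Set S) (w : Word S), evalG R w ∈ SG R S' →
    ∃ v u : Word S, Supported S' v ∧ Supported (S' ∩ S₀) u ∧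
      Rw R w (v ++ u) ∧ evalG R v ∈ T S₀

section Evaluation

variable {S G : Type} [Group G]

theorem pos_append (v u : List S) : pos (v ++ u) = pos v ++ pos u :=
  List.map_append ..

theorem evalW_eq_lift_mk (f : S → G) (w : Word S) :
    evalW f w = FreeGroup.lift f (FreeGroup.mk w) := by
  rw [FreeGroup.lift_mk, evalW]
  congr 1
  exact List.map_congr_left fun ⟨_, b⟩ _ => by cases b <;> rfl

theorem evalW_append (f : S → G) (w₁ w₂ : Word S) :
    evalW f (w₁ ++ w₂) = evalW f w₁ * evalW f w₂ := by
  simp only [evalW_eq_lift_mk, ← FreeGroup.mul_mk, map_mul]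

theorem evalW_winv (f : S → G) (w : Word S) : evalW f (winv w) = (evalW f w)⁻¹ := by
  simp only [evalW_eq_lift_mk, winv, ← FreeGroup.invRev.eq_def, ← FreeGroup.inv_mk, map_inv]

theorem evalW_cancel_pair (f : S → G) (s : S) (e : Bool) : evalW f [(s, e), (s, !e)] = 1 := by
  cases e <;> simp [evalW]

theorem evalW_map {H : Type} [Group H] (φ : G →* H) (f : S → G) (w : Word S) :
    evalW (fun s => φ (f s)) w = φ (evalW f w) := by
  simp only [evalW, map_list_prod, List.map_map]
  exact congrArg _ (List.map_congr_left fun ⟨_, b⟩ _ => by cases b <;> simp)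

theorem evalW_mem_of_forall_mem {K : Subgroup G} {f : S → G} {w : Word S}
    (hw : ∀ p ∈ w, f p.1 ∈ K) : evalW f w ∈ K := by
  refine K.list_prod_mem fun x hx => ?_
  obtain ⟨⟨s, b⟩, hp, rfl⟩ := List.mem_map.mp hx
  cases b
  · exact K.inv_mem (hw _ hp)
  · exact hw _ hp

variable {R : Set (List S × List S)} {f : S → G}

theorem Step.evalW_eq (hf : ∀ v v', InR R v v' → evalW f (pos v) = evalW f (pos v'))
    {w w' : Word S} (h : Step R w w') : evalW f w = evalW f w' := by
  cases h with
  | free w₁ w₂ s e => rw [evalW_append, evalW_append, evalW_cancel_pair, mul_one, evalW_append]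
  | rel w₁ w₂ v v' hr => simp only [evalW_append, hf v v' hr]
  | relInv w₁ w₂ v v' hr => simp only [evalW_append, evalW_winv, hf v v' hr]
  | rev2r w₁ w₂ v v' u u' _ _ hr =>
    have h := hf _ _ hr
    simp only [pos_append, evalW_append] at h
    simp only [evalW_append, evalW_winv]
    rw [mul_assoc _ _ (evalW f (pos v')), mul_assoc _ (evalW f (pos u))]
    congr 2
    rw [inv_mul_eq_iff_eq_mul, ← mul_assoc, h, mul_inv_cancel_right]
  | rev2l w₁ w₂ v v' u u' _ _ hr =>
    have h := hf _ _ hr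
    simp only [pos_append, evalW_append] at h
    simp only [evalW_append, evalW_winv]
    rw [mul_assoc _ _ (evalW f (pos v'))⁻¹, mul_assoc _ (evalW f (pos u))⁻¹]
    congr 2
    rw [mul_inv_eq_iff_eq_mul, mul_assoc, ← h, inv_mul_cancel_left]

theorem Rw.evalW_eq (hf : ∀ v v', InR R v v' → evalW f (pos v) = evalW f (pos v'))
    {w w' : Word S} (h : Rw R w w') : evalW f w = evalW f w' := by
  induction h with
  | refl => rfl
  | tail _ hstep ih => exact ih.trans (hstep.evalW_eq hf)

end Evaluation

section PresentedGroup

variable {S : Type} (R : Set (List S × List S))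

theorem evalG_eq_mk_evalW (w : Word S) :
    evalG R w = PresentedGroup.mk (rels R) (evalW FreeGroup.of w) :=
  evalW_map _ _ _

theorem evalG_eq_mk (w : Word S) : evalG R w = PresentedGroup.mk (rels R) (FreeGroup.mk w) := by
  rw [evalG_eq_mk_evalW, evalW_eq_lift_mk, FreeGroup.lift_of_eq_id, MonoidHom.id_apply]

theorem evalG_surjective : Function.Surjective (evalG R) := by
  intro g
  obtain ⟨x, rfl⟩ := PresentedGroup.mk_surjective (rels R) g
  obtain ⟨w, rfl⟩ := Quot.exists_rep x
  exact ⟨w, evalG_eq_mk R w⟩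

theorem evalG_append (w₁ w₂ : Word S) : evalG R (w₁ ++ w₂) = evalG R w₁ * evalG R w₂ :=
  evalW_append _ _ _

theorem evalG_pos_eq_of_inR {v v' : List S} (h : InR R v v') :
    evalG R (pos v) = evalG R (pos v') := by
  rw [evalG_eq_mk_evalW, evalG_eq_mk_evalW]
  rcases h with h | h
  · exact PresentedGroup.mk_eq_mk_of_mul_inv_mem ⟨(v, v'), h, rfl⟩
  · exact Eq.symm <| PresentedGroup.mk_eq_mk_of_mul_inv_mem ⟨(v', v), h, rfl⟩

theorem Rw.evalG_eq {w w' : Word S} (h : Rw R w w') : evalG R w = evalG R w' :=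
  h.evalW_eq fun _ _ => evalG_pos_eq_of_inR R

theorem SG_mono {A B : Set S} (h : A ⊆ B) : SG R A ≤ SG R B :=
  Subgroup.closure_mono fun _ ⟨s, hs, hx⟩ => ⟨s, h hs, hx⟩

theorem evalG_mem_SG_of_supported {S' : Set S} {w : Word S} (h : Supported S' w) :
    evalG R w ∈ SG R S' :=
  evalW_mem_of_forall_mem fun p hp => Subgroup.subset_closure ⟨p.1, h p hp, rfl⟩

end PresentedGroup

theorem IsTransversal.eq_one_of_mem {G : Type} [Group G] {H : Subgroup G} {T : Set G}
    (hT : IsTransversal H T) {t : G} (htT : t ∈ T) (htH : t ∈ H) : t = 1 :=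
  (hT.2 1).unique ⟨htT, t, htH, (one_mul t).symm⟩ ⟨hT.1, 1, H.one_mem, (one_mul 1).symm⟩

theorem subgroup_intersection_of_propertyHPlus_general {S : Type}
    (R : Set (List S × List S))
    (T : Set S → Set (PresentedGroup (rels R)))
    (hT : ∀ S₀ : Set S, IsTransversal (SG R S₀) (T S₀))
    (hHp : PropertyHPlus R T)
    (S' S'' : Set S) :
    SG R S' ⊓ SG R S'' = SG R (S' ∩ S'') := by
  refine le_antisymm (fun g hg => ?_)
    (le_inf (SG_mono R Set.inter_subset_left) (SG_mono R Set.inter_subset_right))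
  obtain ⟨hg', hg''⟩ := Subgroup.mem_inf.mp hg
  obtain ⟨w, rfl⟩ := evalG_surjective R g
  obtain ⟨v, u, -, hu, hwvu, hvT⟩ := hHp S' S'' w hg'
  have hw : evalG R w = evalG R v * evalG R u := by rw [hwvu.evalG_eq, evalG_append]
  have hu' : evalG R u ∈ SG R (S' ∩ S'') := evalG_mem_SG_of_supported R hu
  have hv'' : evalG R v ∈ SG R S'' := by
    rw [eq_mul_inv_of_mul_eq hw.symm]
    exact mul_mem hg'' (inv_mem (SG_mono R Set.inter_subset_right hu'))
  rwa [hw, (hT S'').eq_one_of_mem hvT hv'', one_mul]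

/-- if a positive presentation `(S, R)` satisfies Property `H⁺`
(with respect to some `S`-sequence of transversals), then for all subsets
`S', S''` of `S` one has `⟨S'⟩ ⊓ ⟨S''⟩ = ⟨S' ∩ S''⟩` in `⟨S | R⟩`. -/
theorem subgroup_intersection_of_propertyHPlus {S : Type}
    (R : Set (List S × List S)) (hpos : Positive R)
    (T : Set S → Set (PresentedGroup (rels R)))
    (hT : ∀ S₀ : Set S, IsTransversal (SG R S₀) (T S₀))
    (hHp : PropertyHPlus R T)
    (S' S'' : Set S) :
    SG R S' ⊓ SG R S'' = SG R (S' ∩ S'') :=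
  subgroup_intersection_of_propertyHPlus_general R T hT hHp S' S''

end ArtinConj
end

section
/- Every right-angled Artin–Tits presentation (S,R) satisfies Property H: for every word w over S ∪ S⁻¹ representing the identity in the right-angled Artin group ⟨S|R⟩, w can be transformed to the empty word using only special transformations of types 0, 1, and 2. -/
namespace ArtinConj

/-- The relation set of the right-angled presentation whose commuting pairs of
generators are given by `rel`. -/
def commRels {S : Type} (rel : S → S → Prop) : Set (List S × List S) :=
  {p | ∃ s t : S, rel s t ∧ p = ([s, t], [t, s])}

/-!
Call *basic steps* the cancellation of a factor `sᵉ s⁻ᵉ` and the swap of two adjacent letters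
whose generators are adjacent in the commutation graph `SimpleGraph.fromRel rel`; each is a
special transformation of type 0, 1 or 2. Generators act by left multiplication on words modulo
basic steps and satisfy the commutation relations there, so a word representing `1` is connected
to the empty word by basic steps taken in both directions.

It remains to see that backward steps are never needed, i.e. that reducibility to the empty word
survives a cancellation. We prove this for the cancellation of `sᵉ m s⁻ᵉ` to `m` with `m`
commuting with `s`: this class of cancellations is stable under basic steps, in the sense that a
basic step either moves the pair along (and can be imitated on the cancelled word) or cancels one
of its letters, in which case the cancelled word already reduces to the result of the step.
-/

open Relation

section

variable {S : Type}

section BasicStep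

variable (G : SimpleGraph S)

inductive BasicStep : Word S → Word S → Prop
  | cancel (s : S) (e : Bool) (w : Word S) : BasicStep ((s, e) :: (s, !e) :: w) w
  | swap (x y : S × Bool) (w : Word S) (h : G.Adj x.1 y.1) : BasicStep (x :: y :: w) (y :: x :: w)
  | cons (x : S × Bool) {w w' : Word S} : BasicStep w w' → BasicStep (x :: w) (x :: w')

/-- `EraseCommuting G x u v`: `v` is `u` with an occurrence of `x` erased that commutes with all
letters before it. -/
inductive EraseCommuting (x : S × Bool) : Word S → Word S → Prop
  | head (u : Word S) : EraseCommuting x (x :: u) u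
  | cons {y : S × Bool} {u v : Word S} (h : G.Adj x.1 y.1) :
      EraseCommuting x u v → EraseCommuting x (y :: u) (y :: v)

/-- `CancelCommuting G u v`: `v` is `u` with a factor `sᵉ m s⁻ᵉ` replaced by `m`, where `m`
commutes with `s`. -/
inductive CancelCommuting : Word S → Word S → Prop
  | head (x : S × Bool) {u v : Word S} :
      EraseCommuting G (x.1, !x.2) u v → CancelCommuting (x :: u) v
  | cons (y : S × Bool) {u v : Word S} : CancelCommuting u v → CancelCommuting (y :: u) (y :: v)

variable {G}

theorem reflTransGen_basicStep_cons (x : S × Bool) {u v : Word S}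
    (h : ReflTransGen (BasicStep G) u v) : ReflTransGen (BasicStep G) (x :: u) (x :: v) :=
  ReflTransGen.lift (x :: ·) (fun _ _ => BasicStep.cons x) _ _ h

theorem EraseCommuting.reflTransGen_cons {x : S × Bool} {u v : Word S}
    (h : EraseCommuting G x u v) : ReflTransGen (BasicStep G) (x :: v) u := by
  induction h with
  | head => exact .refl
  | cons hy _ ih => exact .head (BasicStep.swap _ _ _ hy) (reflTransGen_basicStep_cons _ ih)

/-- The second alternative occurs when the step cancels the erased letter against its
inverse. -/
theorem BasicStep.exists_eraseCommuting_or {u z v : Word S} {x : S × Bool}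
    (h : BasicStep G u z) (hv : EraseCommuting G x u v) :
    (∃ v', EraseCommuting G x z v' ∧ ReflTransGen (BasicStep G) v v') ∨
      ReflTransGen (BasicStep G) v ((x.1, !x.2) :: z) := by
  induction h generalizing v with
  | cancel =>
    cases hv with
    | head => exact .inr .refl
    | cons hx hv =>
      cases hv with
      | head => exact (G.irrefl hx).elim
      | cons _ hv => exact .inl ⟨_, hv, .single (BasicStep.cancel _ _ _)⟩
  | swap y y' w hyy' =>
    cases hv with
    | head => exact .inl ⟨_, (EraseCommuting.head w).cons hyy', .refl⟩
    | cons hy hv =>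
      cases hv with
      | head => exact .inl ⟨_, EraseCommuting.head _, .refl⟩
      | cons hy' hv =>
        exact .inl ⟨_, (hv.cons hy).cons hy', .single (BasicStep.swap _ _ _ hyy')⟩
  | cons y h ih =>
    cases hv with
    | head => exact .inl ⟨_, EraseCommuting.head _, .single h⟩
    | cons hy hv =>
      rcases ih hv with ⟨v', hv', hred⟩ | hred
      · exact .inl ⟨_, hv'.cons hy, reflTransGen_basicStep_cons y hred⟩
      · exact .inr ((reflTransGen_basicStep_cons y hred).tail (BasicStep.swap _ _ _ hy.symm))

/-- The second alternative occurs when the step cancels a letter of the pair. -/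
theorem BasicStep.exists_cancelCommuting_or {u z v : Word S} (h : BasicStep G u z)
    (hv : CancelCommuting G u v) :
    (∃ v', CancelCommuting G z v' ∧ ReflTransGen (BasicStep G) v v') ∨
      ReflTransGen (BasicStep G) v z := by
  induction h generalizing v with
  | cancel =>
    cases hv with
    | head _ hv =>
      cases hv with
      | head => exact .inr .refl
      | cons hx _ => exact (G.irrefl hx).elim
    | cons _ hv =>
      cases hv with
      | head _ hv => simpa using Or.inr hv.reflTransGen_cons
      | cons _ hv => exact .inl ⟨_, hv, .single (BasicStep.cancel _ _ _)⟩
  | swap y y' w hyy' =>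
    cases hv with
    | head _ hv =>
      cases hv with
      | head => exact (G.irrefl hyy').elim
      | cons _ hv => exact .inl ⟨_, .cons y' (.head y hv), .refl⟩
    | cons _ hv =>
      cases hv with
      | head _ hv => exact .inl ⟨_, .head y' (hv.cons hyy'.symm), .refl⟩
      | cons _ hv =>
        exact .inl ⟨_, .cons y' (.cons y hv), .single (BasicStep.swap _ _ _ hyy')⟩
  | cons y h ih =>
    cases hv with
    | head _ hv =>
      rcases h.exists_eraseCommuting_or hv with ⟨v', hv', hred⟩ | hred
      · exact .inl ⟨v', .head y hv', hred⟩
      · simpa using Or.inr hred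
    | cons _ hv =>
      rcases ih hv with ⟨v', hv', hred⟩ | hred
      · exact .inl ⟨_, hv'.cons y, reflTransGen_basicStep_cons y hred⟩
      · exact .inr (reflTransGen_basicStep_cons y hred)

theorem CancelCommuting.reflTransGen_nil {u v : Word S} (h : ReflTransGen (BasicStep G) u [])
    (hv : CancelCommuting G u v) : ReflTransGen (BasicStep G) v [] := by
  induction h using ReflTransGen.head_induction_on generalizing v with
  | refl => cases hv
  | head hstep hrest ih =>
    rcases hstep.exists_cancelCommuting_or hv with ⟨v', hv', hred⟩ | hred
    · exact hred.trans (ih hv')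
    · exact hred.trans hrest

theorem BasicStep.cancelCommuting_or_symm {u v : Word S} (h : BasicStep G u v) :
    CancelCommuting G u v ∨ BasicStep G v u := by
  induction h with
  | cancel _ _ w => exact .inl (.head _ (.head w))
  | swap x y w hxy => exact .inr (BasicStep.swap y x w hxy.symm)
  | cons y _ ih => exact ih.imp (.cons y) (BasicStep.cons y)

theorem BasicStep.reflTransGen_nil_iff {u v : Word S} (h : BasicStep G u v) :
    ReflTransGen (BasicStep G) u [] ↔ ReflTransGen (BasicStep G) v [] := by
  refine ⟨fun hu => ?_, ReflTransGen.head h⟩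
  rcases h.cancelCommuting_or_symm with hc | hvu
  · exact hc.reflTransGen_nil hu
  · exact ReflTransGen.head hvu hu

theorem reflTransGen_nil_of_eqvGen {w : Word S} (h : EqvGen (BasicStep G) w []) :
    ReflTransGen (BasicStep G) w [] := by
  suffices ∀ u v, EqvGen (BasicStep G) u v →
      (ReflTransGen (BasicStep G) u [] ↔ ReflTransGen (BasicStep G) v []) from
    (this w [] h).mpr .refl
  intro u v huv
  induction huv with
  | rel u v h => exact h.reflTransGen_nil_iff
  | refl => exact .rfl
  | symm _ _ _ ih => exact ih.symm
  | trans _ _ _ _ _ ih₁ ih₂ => exact ih₁.trans ih₂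

end BasicStep

section RightAngledArtinGroup

variable (G : SimpleGraph S)

def letterPerm (s : S) : Equiv.Perm (Quot (BasicStep G)) where
  toFun := Quot.map ((s, true) :: ·) fun _ _ => BasicStep.cons _
  invFun := Quot.map ((s, false) :: ·) fun _ _ => BasicStep.cons _
  left_inv := Quot.ind fun u => Quot.sound (BasicStep.cancel s false u)
  right_inv := Quot.ind fun u => Quot.sound (BasicStep.cancel s true u)

variable {G}

theorem evalW_letterPerm_apply (w u : Word S) :
    evalW (letterPerm G) w (Quot.mk _ u) = Quot.mk _ (w ++ u) := by
  induction w with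
  | nil => rfl
  | cons x w ih =>
    obtain ⟨s, _ | _⟩ := x
    exacts [congrArg (letterPerm G s).symm ih, congrArg (letterPerm G s) ih]

theorem letterPerm_mul_comm {s t : S} (h : G.Adj s t) :
    letterPerm G s * letterPerm G t = letterPerm G t * letterPerm G s :=
  Equiv.ext <| Quot.ind fun u => Quot.sound (BasicStep.swap (s, true) (t, true) u h)

end RightAngledArtinGroup

theorem MonoidHom.map_evalW {M N : Type} [Group M] [Group N] (φ : M →* N) (f : S → M)
    (w : Word S) : φ (evalW f w) = evalW (φ ∘ f) w := by
  simp only [evalW, map_list_prod, List.map_map]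
  congr 2
  funext x
  split <;> simp [*]

theorem lift_letterPerm_eq_one_of_mem_rels (rel : S → S → Prop) :
    ∀ r ∈ rels (commRels rel), FreeGroup.lift (letterPerm (SimpleGraph.fromRel rel)) r = 1 := by
  rintro _ ⟨_, ⟨s, t, hst, rfl⟩, rfl⟩
  simp only [map_mul, map_inv, MonoidHom.map_evalW, mul_inv_eq_one]
  rcases eq_or_ne s t with rfl | hne
  · rfl
  · simpa [evalW, pos] using
      letterPerm_mul_comm ((SimpleGraph.fromRel_adj _ _ _).2 ⟨hne, .inl hst⟩)

theorem inR_commRels_swap {rel : S → S → Prop} {s t : S} (h : rel s t ∨ rel t s) :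
    InR (commRels rel) [s, t] [t, s] :=
  h.imp (fun h => ⟨s, t, h, rfl⟩) (fun h => ⟨t, s, h, rfl⟩)

theorem BasicStep.step_commRels {rel : S → S → Prop} {u v : Word S}
    (h : BasicStep (SimpleGraph.fromRel rel) u v) (c : Word S) :
    Step (commRels rel) (c ++ u) (c ++ v) := by
  induction h generalizing c with
  | cancel s e w => simpa using Step.free c w s e
  | swap x y w hxy =>
    obtain ⟨s, _ | _⟩ := x <;> obtain ⟨t, _ | _⟩ := y <;>
      have hst := inR_commRels_swap ((SimpleGraph.fromRel_adj _ _ _).1 hxy).2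
    · simpa [pos, winv] using Step.relInv c w [t, s] [s, t] hst.symm
    · simpa [pos, winv] using Step.rev2r c w [s] [t] [t] [s] (by simp) (by simp) hst
    · simpa [pos, winv] using Step.rev2l c w [s] [t] [t] [s] (by simp) (by simp) hst.symm
    · simpa [pos] using Step.rel c w [s, t] [t, s] hst
  | cons x _ ih => simpa using ih (c ++ [x])

theorem eqvGen_basicStep_nil_of_evalG_eq_one {rel : S → S → Prop} {w : Word S}
    (hw : evalG (commRels rel) w = 1) : EqvGen (BasicStep (SimpleGraph.fromRel rel)) w [] := by
  have := congrArg (· (Quot.mk _ [])) <|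
    congrArg (PresentedGroup.toGroup (lift_letterPerm_eq_one_of_mem_rels rel)) hw
  simp only [evalG, MonoidHom.map_evalW, Function.comp_def, PresentedGroup.toGroup.of,
    map_one] at this
  exact Quot.eqvGen_exact (by simpa using (evalW_letterPerm_apply w []).symm.trans this)

end

theorem right_angled_propertyH_general {S : Type}
    (rel : S → S → Prop) :
    PropertyH (commRels rel) := fun w hw =>
  ReflTransGen.mono (fun _ _ h => by simpa using h.step_commRels [])
    _ _ (reflTransGen_nil_of_eqvGen (eqvGen_basicStep_nil_of_evalG_eq_one hw))

/-- every right-angled Artin–Tits presentation satisfies Property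
`H`: every word over `S ∪ S⁻¹` representing the identity of the right-angled
Artin group can be transformed to the empty word using special transformations
of types `0`, `1`, `2` only. -/
theorem right_angled_propertyH {S : Type}
    (rel : S → S → Prop) (hsym : ∀ s t : S, rel s t → rel t s)
    (hirr : ∀ s : S, ¬ rel s s) :
    PropertyH (commRels rel) :=
  right_angled_propertyH_general rel

end ArtinConj
end
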